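/- arXiv:2001.10077 — 9 statements merged into one kernel-verified Lean document; each statement's English description precedes it below -/
import Mathlib

section
/- Let f = [[1,1],[0,1]] and h = [[a,b],[c,d]] in SL(2,ℂ) with ad−bc=1 and c ≠ 0. Then the matrix ψ = [[a, −(1+a²)/c],[c, −a]] satisfies det ψ = 1, tr ψ = 0 (so ψ represents an elliptic of order two in PSL(2,ℂ)), ψ f ψ⁻¹ = h f h⁻¹, and tr([f,ψ]) − 2 = tr([f,h]) − 2. -/
theorem stmt2 (a b c d : ℂ) (hdet : a * d - b * c = 1) (hc : c ≠ 0)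
    (f h ψ : Matrix (Fin 2) (Fin 2) ℂ)
    (hf : f = !![1, 1; 0, 1]) (hh : h = !![a, b; c, d])
    (hψ : ψ = !![a, -(1 + a ^ 2) / c; c, -a]) :
    ψ.det = 1 ∧ Matrix.trace ψ = 0 ∧ ψ * f * ψ⁻¹ = h * f * h⁻¹ ∧
      Matrix.trace (f * ψ * f⁻¹ * ψ⁻¹) - 2 = Matrix.trace (f * h * f⁻¹ * h⁻¹) - 2 := by
  have hb : b = (a * d - 1) / c := by field_simp; linear_combination -hdet
  subst hb
  have hψi : ψ⁻¹ = !![-a, (1 + a ^ 2) / c; -c, a] := by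
    apply Matrix.inv_eq_right_inv
    subst hψ
    ext i j
    fin_cases i <;> fin_cases j <;>
      simp [Matrix.mul_apply, Fin.sum_univ_succ] <;>
      first
      | ring1
      | (field_simp [hc]; try ring)
  have hhi : h⁻¹ = !![d, -((a * d - 1) / c); -c, a] := by
    apply Matrix.inv_eq_right_inv
    subst hh
    ext i j
    fin_cases i <;> fin_cases j <;>
      simp [Matrix.mul_apply, Fin.sum_univ_succ] <;>
      first
      | ring1
      | (field_simp [hc]; try ring)
  have hfi : f⁻¹ = !![1, -1; 0, 1] := by
    apply Matrix.inv_eq_right_inv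
    subst hf
    ext i j
    fin_cases i <;> fin_cases j <;> simp [Matrix.mul_apply, Fin.sum_univ_succ]
  subst hf hh hψ
  refine ⟨?_, ?_, ?_, ?_⟩
  · simp [Matrix.det_fin_two]; field_simp; ring
  · simp [Matrix.trace_fin_two]
  · rw [hψi, hhi]
    ext i j
    fin_cases i <;> fin_cases j <;>
      simp [Matrix.mul_apply, Fin.sum_univ_succ] <;>
      first
      | ring1
      | (field_simp [hc]; try ring)
  · rw [hψi, hhi, hfi]
    simp [Matrix.trace_fin_two, Matrix.mul_apply, Fin.sum_univ_succ]
    field_simp [hc]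
    ring
end

section
/- Let f = [[1,1],[0,1]] ∈ SL(2,ℂ) and let φ be any matrix in SL(2,ℂ) with tr([f,φ]) − 2 = γ. Then tr([f, φ f φ⁻¹]) − 2 = γ². -/
theorem stmt3 (γ : ℂ) (f φ : Matrix (Fin 2) (Fin 2) ℂ)
    (hf : f = !![1, 1; 0, 1]) (hφdet : φ.det = 1)
    (hγ : Matrix.trace (f * φ * f⁻¹ * φ⁻¹) - 2 = γ) :
    Matrix.trace (f * (φ * f * φ⁻¹) * f⁻¹ * (φ * f * φ⁻¹)⁻¹) - 2 = γ ^ 2 := by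
  subst hf
  obtain ⟨a, b, c, d, rfl⟩ : ∃ a b c d, φ = !![a, b; c, d] :=
    ⟨_, _, _, _, (Matrix.eta_fin_two φ)⟩
  rw [Matrix.det_fin_two_of] at hφdet
  have hfinv : (!![1, 1; 0, 1] : Matrix (Fin 2) (Fin 2) ℂ)⁻¹ = !![1, -1; 0, 1] := by
    apply Matrix.inv_eq_right_inv
    ext i j
    fin_cases i <;> fin_cases j <;> simp [Matrix.mul_apply, Fin.sum_univ_two]
  have hφinv : (!![a, b; c, d])⁻¹ = !![d, -b; -c, a] := by
    apply Matrix.inv_eq_right_inv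
    ext i j
    fin_cases i <;> fin_cases j <;>
      simp [Matrix.mul_apply, Fin.sum_univ_two] <;>
      (first | linear_combination hφdet | linear_combination -hφdet | ring)
  have hconj : (!![a, b; c, d] * !![1, 1; 0, 1] * (!![a, b; c, d])⁻¹)⁻¹ =
      !![a, b; c, d] * !![1, -1; 0, 1] * (!![a, b; c, d])⁻¹ := by
    apply Matrix.inv_eq_right_inv
    rw [hφinv]
    ext i j
    fin_cases i <;> fin_cases j <;>
      simp [Matrix.mul_apply, Fin.sum_univ_two] <;>
      (first
        | linear_combination (a * d - b * c) * hφdet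
        | linear_combination (a * d - b * c + 1) * hφdet
        | linear_combination hφdet
        | linear_combination -hφdet
        | ring)
  rw [hfinv, hφinv] at hγ
  rw [hconj, hfinv, hφinv]
  simp [Matrix.trace_fin_two, Matrix.mul_apply, Fin.sum_univ_two] at hγ ⊢
  linear_combination (γ + c ^ 2 - 2 * b * c + 2 * a * d - 2) * hγ +
    (6 - 4 * c ^ 2 + 2 * b * c - 2 * a * d) * hφdet
end

section
/- Let f = [[1,1],[0,1]] ∈ SL(2,ℂ) and φ ∈ SL(2,ℂ) with tr φ = 0 and tr([f,φ]) − 2 = γ. Then tr([f, φ f² φ⁻¹]) − 2 = 4γ². -/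
theorem stmt4 (γ : ℂ) (f φ : Matrix (Fin 2) (Fin 2) ℂ)
    (hf : f = !![1, 1; 0, 1]) (hφdet : φ.det = 1) (hφtr : Matrix.trace φ = 0)
    (hγ : Matrix.trace (f * φ * f⁻¹ * φ⁻¹) - 2 = γ) :
    Matrix.trace (f * (φ * f ^ 2 * φ⁻¹) * f⁻¹ * (φ * f ^ 2 * φ⁻¹)⁻¹) - 2 = 4 * γ ^ 2 := by
  set a := φ 0 0 with ha
  set b := φ 0 1 with hb
  set c := φ 1 0 with hc
  set d := φ 1 1 with hd
  have hφ : φ = !![a, b; c, d] := by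
    rw [ha, hb, hc, hd]; exact (Matrix.etaExpand_eq φ).symm
  have hdet : a * d - b * c = 1 := by
    simpa [Matrix.det_fin_two] using hφdet
  have htr : a + d = 0 := by
    simpa [hφ, Matrix.trace_fin_two] using hφtr
  have hfinv : f⁻¹ = !![1, -1; 0, 1] := by
    apply Matrix.inv_eq_right_inv
    rw [hf, Matrix.one_fin_two]
    norm_num [Matrix.mul_fin_two]
  have hφinv : φ⁻¹ = !![d, -b; -c, a] := by
    apply Matrix.inv_eq_right_inv
    rw [hφ, Matrix.one_fin_two]
    simp only [Matrix.mul_fin_two]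
    ext i j
    fin_cases i <;> fin_cases j <;> simp <;>
      (first
        | ring1
        | linear_combination hdet
        | linear_combination 2 * hdet
        | linear_combination -hdet
        | linear_combination -2 * hdet
        | linear_combination (a * d - b * c + 1) * hdet
        | linear_combination (-(a * d - b * c) - 1) * hdet)
  have hf2 : f ^ 2 = !![1, 2; 0, 1] := by
    rw [sq, hf]; norm_num [Matrix.mul_fin_two]
  have hM : φ * f ^ 2 * φ⁻¹ =
      !![(a * d - b * c) - 2 * (a * c), 2 * a ^ 2;
         -(2 * c ^ 2), (a * d - b * c) + 2 * (a * c)] := by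
    rw [hφinv, hf2, hφ]
    simp only [Matrix.mul_fin_two]
    ext i j
    fin_cases i <;> fin_cases j <;> simp <;> ring
  have hMinv : (φ * f ^ 2 * φ⁻¹)⁻¹ =
      !![(a * d - b * c) + 2 * (a * c), -(2 * a ^ 2);
         2 * c ^ 2, (a * d - b * c) - 2 * (a * c)] := by
    apply Matrix.inv_eq_right_inv
    rw [hM, Matrix.one_fin_two]
    simp only [Matrix.mul_fin_two]
    ext i j
    fin_cases i <;> fin_cases j <;> simp <;>
      (first
        | ring1
        | linear_combination hdet
        | linear_combination 2 * hdet
        | linear_combination -hdet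
        | linear_combination -2 * hdet
        | linear_combination (a * d - b * c + 1) * hdet
        | linear_combination (-(a * d - b * c) - 1) * hdet)
  have hγ1 : γ = c ^ 2 := by
    rw [hfinv, hφinv, hf, hφ] at hγ
    simp only [Matrix.mul_fin_two, Matrix.trace_fin_two_of] at hγ
    linear_combination -hγ + 2 * hdet
  rw [hMinv, hM, hfinv, hf, hγ1]
  simp only [Matrix.mul_fin_two, Matrix.trace_fin_two_of]
  linear_combination (2 * (a * d - b * c) + 2) * hdet
end

section
/- Let f = [[1,1],[0,1]] ∈ SL(2,ℂ) and φ ∈ SL(2,ℂ) with tr φ = 0 and tr([f,φ]) − 2 = γ. Then for w = φ f φ⁻¹ f φ, one has tr([f, w]) − 2 = γ(1−γ)². -/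
set_option maxHeartbeats 1000000

lemma inv_eq_adj (M : Matrix (Fin 2) (Fin 2) ℂ) (h : M.det = 1) :
    M⁻¹ = M.adjugate := by
  rw [Matrix.inv_def, h]; simp

theorem stmt5 (γ : ℂ) (f φ : Matrix (Fin 2) (Fin 2) ℂ)
    (hf : f = !![1, 1; 0, 1]) (hφdet : φ.det = 1) (hφtr : Matrix.trace φ = 0)
    (hγ : Matrix.trace (f * φ * f⁻¹ * φ⁻¹) - 2 = γ) :
    Matrix.trace (f * (φ * f * φ⁻¹ * f * φ) * f⁻¹ * (φ * f * φ⁻¹ * f * φ)⁻¹) - 2 = γ * (1 - γ) ^ 2 := by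
  obtain ⟨a, b, c, d, hφ⟩ : ∃ a b c d, φ = !![a, b; c, d] :=
    ⟨φ 0 0, φ 0 1, φ 1 0, φ 1 1, (Matrix.etaExpand_eq φ).symm⟩
  subst hφ hf
  have hfdet : (!![(1:ℂ), 1; 0, 1]).det = 1 := by simp [Matrix.det_fin_two]
  have hd : d = -a := by
    have := hφtr; simp [Matrix.trace_fin_two] at this; linear_combination this
  subst hd
  have hdet : -(a * a) - b * c = 1 := by
    have := hφdet; simp [Matrix.det_fin_two] at this; linear_combination this
  have hw : ((!![a, b; c, -a] * !![(1:ℂ), 1; 0, 1] * (!![a, b; c, -a])⁻¹ *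
      !![(1:ℂ), 1; 0, 1] * !![a, b; c, -a])).det = 1 := by
    rw [inv_eq_adj _ hφdet]
    simp only [Matrix.det_mul, Matrix.det_adjugate, hφdet, hfdet]
    norm_num
  rw [inv_eq_adj _ hw, inv_eq_adj _ hφdet, inv_eq_adj _ hfdet] at *
  simp only [Matrix.adjugate_fin_two, Matrix.mul_fin_two, Matrix.trace_fin_two, Matrix.of_apply,
    Matrix.cons_val', Matrix.cons_val_zero, Matrix.cons_val_one, Matrix.head_cons,
    Matrix.head_fin_const, Matrix.empty_val', Matrix.cons_val_fin_one] at *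
  subst hγ
  linear_combination (-6*b^2*c^2 - 12*a^2*b*c + 11*b*c^3 - 26*b*c - 6*a^4 + 11*a^2*c^2
    - 26*a^2 - 8*c^4 + 21*c^2 - 16) * hdet
end

section
/- Let f = [[1,1],[0,1]] ∈ SL(2,ℂ) and φ ∈ SL(2,ℂ) with tr φ = 0 and tr([f,φ]) − 2 = γ. Then for w = φ f φ⁻¹ f⁻¹ φ, one has tr([f,w]) − 2 = γ(1+γ)². -/
theorem stmt6 (γ : ℂ) (f φ : Matrix (Fin 2) (Fin 2) ℂ)
    (hf : f = !![1, 1; 0, 1]) (hφdet : φ.det = 1) (hφtr : Matrix.trace φ = 0)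
    (hγ : Matrix.trace (f * φ * f⁻¹ * φ⁻¹) - 2 = γ) :
    Matrix.trace (f * (φ * f * φ⁻¹ * f⁻¹ * φ) * f⁻¹ * (φ * f * φ⁻¹ * f⁻¹ * φ)⁻¹) - 2 = γ * (1 + γ) ^ 2 := by
  obtain ⟨a, b, c, d, hφ⟩ : ∃ a b c d, φ = !![a, b; c, d] :=
    ⟨_, _, _, _, Matrix.eta_fin_two φ⟩
  subst hφ hf
  rw [Matrix.det_fin_two_of] at hφdet
  rw [Matrix.trace_fin_two_of] at hφtr
  have hd : d = -a := by linear_combination hφtr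
  subst hd
  have hfi : (!![1, 1; 0, 1] : Matrix (Fin 2) (Fin 2) ℂ)⁻¹ = !![1, -1; 0, 1] := by
    apply Matrix.inv_eq_right_inv
    norm_num [Matrix.mul_fin_two]
    exact Matrix.one_fin_two.symm
  have hdetφ : (!![a, b; c, -a] : Matrix (Fin 2) (Fin 2) ℂ).det = 1 := by
    rw [Matrix.det_fin_two_of]; linear_combination hφdet
  have hφi : (!![a, b; c, -a] : Matrix (Fin 2) (Fin 2) ℂ)⁻¹ = !![-a, -b; -c, a] := by
    rw [Matrix.inv_def, hdetφ, Matrix.adjugate_fin_two_of]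
    simp
  rw [hfi, hφi] at hγ ⊢
  simp only [Matrix.mul_fin_two] at hγ
  rw [Matrix.trace_fin_two_of] at hγ
  subst hγ
  have hW : (!![a, b; c, -a] : Matrix (Fin 2) (Fin 2) ℂ) * !![1, 1; 0, 1] * !![-a, -b; -c, a]
      * !![1, -1; 0, 1] * !![a, b; c, -a]
      = !![b*c^2 + a*c^2 - a*b*c + a^2*c - a^3, -b^2*c - 2*a*b*c - a^2*c - a^2*b - 2*a^3;
           c^3 - b*c^2 - a^2*c, -(b*c^2 + a*c^2 - a*b*c + a^2*c - a^3)] := by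
    ext i j
    fin_cases i <;> fin_cases j <;>
      simp [Matrix.mul_apply, Fin.sum_univ_two] <;> ring
  rw [hW]
  have hdetW : (!![b*c^2 + a*c^2 - a*b*c + a^2*c - a^3, -b^2*c - 2*a*b*c - a^2*c - a^2*b - 2*a^3;
           c^3 - b*c^2 - a^2*c, -(b*c^2 + a*c^2 - a*b*c + a^2*c - a^3)]
           : Matrix (Fin 2) (Fin 2) ℂ).det = 1 := by
    rw [Matrix.det_fin_two_of]
    linear_combination ((a^2 + b*c)^2 - (a^2 + b*c) + 1) * hφdet
  have hWinv : (!![b*c^2 + a*c^2 - a*b*c + a^2*c - a^3, -b^2*c - 2*a*b*c - a^2*c - a^2*b - 2*a^3;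
           c^3 - b*c^2 - a^2*c, -(b*c^2 + a*c^2 - a*b*c + a^2*c - a^3)]
           : Matrix (Fin 2) (Fin 2) ℂ)⁻¹
      = !![-(b*c^2 + a*c^2 - a*b*c + a^2*c - a^3), -(-b^2*c - 2*a*b*c - a^2*c - a^2*b - 2*a^3);
           -(c^3 - b*c^2 - a^2*c), b*c^2 + a*c^2 - a*b*c + a^2*c - a^3] := by
    rw [Matrix.inv_def, hdetW, Matrix.adjugate_fin_two_of]
    simp
  rw [hWinv]
  simp only [Matrix.mul_fin_two]
  rw [Matrix.trace_fin_two_of]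
  linear_combination (5*c^2 - 4*c^4 - 10*b*c + 11*b*c^3 - 6*b^2*c^2 - 10*a^2 + 11*a^2*c^2
    - 12*a^2*b*c - 6*a^4) * hφdet
end

section
/- Let f = [[1,1],[0,1]] ∈ SL(2,ℂ) and φ ∈ SL(2,ℂ) with tr φ = 0 and tr([f,φ]) − 2 = γ. Then for w = φ f φ⁻¹ f² φ, one has tr([f,w]) − 2 = γ(1−2γ)². -/
theorem stmt7 (γ : ℂ) (f φ : Matrix (Fin 2) (Fin 2) ℂ)
    (hf : f = !![1, 1; 0, 1]) (hφdet : φ.det = 1) (hφtr : Matrix.trace φ = 0)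
    (hγ : Matrix.trace (f * φ * f⁻¹ * φ⁻¹) - 2 = γ) :
    Matrix.trace (f * (φ * f * φ⁻¹ * f ^ 2 * φ) * f⁻¹ * (φ * f * φ⁻¹ * f ^ 2 * φ)⁻¹) - 2 = γ * (1 - 2 * γ) ^ 2 := by
  obtain ⟨a, b, c, d, hφ⟩ : ∃ a b c d, φ = !![a, b; c, d] :=
    ⟨φ 0 0, φ 0 1, φ 1 0, φ 1 1, (Matrix.etaExpand_eq φ).symm⟩
  subst hφ hf
  have hd : d = -a := by
    have := hφtr
    simp [Matrix.trace_fin_two] at this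
    linear_combination this
  subst hd
  have hdet : a * (-a) - b * c = 1 := by
    simpa [Matrix.det_fin_two] using hφdet
  have hfi : (!![(1:ℂ), 1; 0, 1])⁻¹ = !![1, -1; 0, 1] := by
    apply Matrix.inv_eq_right_inv
    ext i j
    fin_cases i <;> fin_cases j <;>
      simp [Matrix.mul_apply, Fin.sum_univ_two, Matrix.one_apply]
  have hφi : (!![a, b; c, -a])⁻¹ = !![-a, -b; -c, a] := by
    apply Matrix.inv_eq_right_inv
    ext i j
    fin_cases i <;> fin_cases j <;>
      simp [Matrix.mul_apply, Fin.sum_univ_two, Matrix.one_apply] <;>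
      first | ring1 | linear_combination hdet
  have hφii : (!![-a, -b; -c, a])⁻¹ = !![a, b; c, -a] := by
    apply Matrix.inv_eq_right_inv
    ext i j
    fin_cases i <;> fin_cases j <;>
      simp [Matrix.mul_apply, Fin.sum_univ_two, Matrix.one_apply] <;>
      first | ring1 | linear_combination hdet
  simp only [pow_two, Matrix.mul_inv_rev] at hγ ⊢
  rw [hfi, hφi] at hγ
  rw [hfi, hφi, hφii]
  simp only [Matrix.mul_fin_two, Matrix.trace_fin_two_of] at hγ ⊢
  linear_combination ((-48) + (65)*c^2 + (-28)*c^4 + (-82)*b*c + (47)*b*c^3 + (-30)*b^2*c^2 + (-82)*a^2 + (47)*a^2*c^2 + (-60)*a^2*b*c + (-30)*a^4) * hdet + ((25) + (-12)*γ + (4)*γ^2 + (-20)*c^2 + (4)*c^2*γ + (4)*c^4 + (40)*b*c + (-8)*b*c*γ + (-16)*b*c^3 + (16)*b^2*c^2 + (40)*a^2 + (-8)*a^2*γ + (-16)*a^2*c^2 + (32)*a^2*b*c + (16)*a^4) * hγ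
end

section
/- Let f = [[1,1],[0,1]] ∈ SL(2,ℂ) and φ ∈ SL(2,ℂ) with tr φ = 0 and tr([f,φ]) − 2 = γ. Then for w = φ f² φ⁻¹ f² φ, one has tr([f,w]) − 2 = γ(1−4γ)². -/
open Matrix

lemma inv2 (M : Matrix (Fin 2) (Fin 2) ℂ) (h : M.det = 1) :
    M⁻¹ = !![M 1 1, -M 0 1; -M 1 0, M 0 0] := by
  rw [Matrix.inv_def, h, Ring.inverse_one, one_smul, Matrix.adjugate_fin_two]

theorem stmt8 (γ : ℂ) (f φ : Matrix (Fin 2) (Fin 2) ℂ)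
    (hf : f = !![1, 1; 0, 1]) (hφdet : φ.det = 1) (hφtr : Matrix.trace φ = 0)
    (hγ : Matrix.trace (f * φ * f⁻¹ * φ⁻¹) - 2 = γ) :
    Matrix.trace (f * (φ * f ^ 2 * φ⁻¹ * f ^ 2 * φ) * f⁻¹ * (φ * f ^ 2 * φ⁻¹ * f ^ 2 * φ)⁻¹) - 2 = γ * (1 - 4 * γ) ^ 2 := by
  subst hf
  set a := φ 0 0 with ha
  set b := φ 0 1 with hb
  set c := φ 1 0 with hc
  have hd : φ 1 1 = -a := by
    have h1 : Matrix.trace φ = a + φ 1 1 := by rw [Matrix.trace_fin_two]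
    rw [hφtr] at h1; linear_combination -h1
  have hφ : φ = !![a, b; c, -a] := by
    rw [Matrix.eta_fin_two φ, hd]
  have hdet : a * (-a) - b * c = 1 := by
    rw [hφ, Matrix.det_fin_two_of] at hφdet; exact hφdet
  have hdet' : φ.det = 1 := hφdet
  have hφinv : φ⁻¹ = !![-a, -b; -c, a] := by
    rw [inv2 φ hdet', hφ]; norm_num
  have hfinv : (!![1, 1; 0, 1] : Matrix (Fin 2) (Fin 2) ℂ)⁻¹ = !![1, -1; 0, 1] := by
    rw [inv2 _ (by norm_num [Matrix.det_fin_two_of])]; norm_num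
  have hw : φ * !![1, 1; 0, 1] ^ 2 * φ⁻¹ * !![1, 1; 0, 1] ^ 2 * φ =
      !![-2*b*c^2 - 4*a*c^2 - a*b*c - 2*a^2*c - a^3, -b^2*c + 4*a^2*c - a^2*b;
         -4*c^3 - b*c^2 - a^2*c, -2*b*c^2 + 4*a*c^2 + a*b*c - 2*a^2*c + a^3] := by
    rw [hφinv, hφ, pow_two]
    ext i j
    fin_cases i <;> fin_cases j <;>
      simp [Matrix.mul_apply, Fin.sum_univ_succ] <;> ring
  have hwdet : (φ * !![1, 1; 0, 1] ^ 2 * φ⁻¹ * !![1, 1; 0, 1] ^ 2 * φ).det = 1 := by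
    rw [hw, Matrix.det_fin_two_of]
    linear_combination (1 - b*c + b^2*c^2 - a^2 + 2*a^2*b*c + a^4) * hdet
  have hwinv := inv2 _ hwdet
  rw [hw] at hwinv
  have hγ' : -2 + c^2 - 2*b*c - 2*a^2 = γ := by
    rw [← hγ, hφinv, hfinv, hφ, Matrix.trace_fin_two]
    simp [Matrix.mul_apply, Fin.sum_univ_succ]
    ring
  rw [hw, hwinv, hfinv, ← hγ', Matrix.trace_fin_two]
  simp [Matrix.mul_apply, Fin.sum_univ_succ]
  linear_combination ((-160) + 225*c^2 - 104*c^4 - 290*b*c + 191*b*c^3 - 126*b^2*c^2 - 290*a^2 + 191*a^2*c^2 - 252*a^2*b*c - 126*a^4) * hdet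
end

section
/- Let f = [[1,1],[0,1]] ∈ SL(2,ℂ) and φ ∈ SL(2,ℂ) with tr φ = 0 and tr([f,φ]) − 2 = γ. Then for w = φ f φ⁻¹ f φ f φ⁻¹, one has tr([f,w]) − 2 = γ²(2−γ)². -/
theorem stmt9 (γ : ℂ) (f φ : Matrix (Fin 2) (Fin 2) ℂ)
    (hf : f = !![1, 1; 0, 1]) (hφdet : φ.det = 1) (hφtr : Matrix.trace φ = 0)
    (hγ : Matrix.trace (f * φ * f⁻¹ * φ⁻¹) - 2 = γ) :
    Matrix.trace (f * (φ * f * φ⁻¹ * f * φ * f * φ⁻¹) * f⁻¹ * (φ * f * φ⁻¹ * f * φ * f * φ⁻¹)⁻¹) - 2 = γ ^ 2 * (2 - γ) ^ 2 := by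
  obtain ⟨a, b, c, d, hφ⟩ : ∃ a b c d, φ = !![a, b; c, d] :=
    ⟨_, _, _, _, by ext i j; fin_cases i <;> fin_cases j <;> rfl⟩
  rw [hφ, Matrix.trace_fin_two_of] at hφtr
  have hd : d = -a := by linear_combination hφtr
  rw [hd] at hφ
  rw [hφ, Matrix.det_fin_two_of] at hφdet
  have hfinv : f⁻¹ = !![1, -1; 0, 1] := by
    apply Matrix.inv_eq_right_inv
    rw [hf]
    norm_num [Matrix.mul_fin_two]
    exact Matrix.one_fin_two.symm
  have hφinv : φ⁻¹ = !![-a, -b; -c, a] := by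
    apply Matrix.inv_eq_right_inv
    ext i j
    rw [Matrix.mul_apply, Fin.sum_univ_two, hφ]
    fin_cases i <;> fin_cases j <;>
      simp [Matrix.one_apply] <;>
      first
      | linear_combination hφdet
      | ring
  have hWdet : (φ * f * φ⁻¹ * f * φ * f * φ⁻¹).det = 1 := by
    have h1 : f.det = 1 := by rw [hf, Matrix.det_fin_two_of]; norm_num
    have h2 : (φ⁻¹).det = 1 := by
      rw [hφinv, Matrix.det_fin_two_of]; linear_combination hφdet
    have h3 : φ.det = 1 := by rw [hφ, Matrix.det_fin_two_of]; linear_combination hφdet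
    simp [Matrix.det_mul, h1, h2, h3]
  have hWinv : (φ * f * φ⁻¹ * f * φ * f * φ⁻¹)⁻¹ = (φ * f * φ⁻¹ * f * φ * f * φ⁻¹).adjugate := by
    rw [Matrix.inv_def, hWdet]; simp
  rw [hfinv, hφinv, hf, hφ, Matrix.mul_fin_two, Matrix.mul_fin_two, Matrix.mul_fin_two,
    Matrix.trace_fin_two_of] at hγ
  rw [hWinv, hfinv, hφinv, hf, hφ]
  simp only [Matrix.mul_fin_two, Matrix.adjugate_fin_two_of, Matrix.trace_fin_two_of]
  subst hγ
  ring_nf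
  linear_combination ((66) + (-96)*c^2 + (52)*c^4 + (-12)*c^6 + (126)*b*c + (-112)*b*c^3 + (20)*b*c^5 + (82)*b^2*c^2 + (-32)*b^2*c^4 + (14)*b^3*c^3 + (126)*a^2 + (-112)*a^2*c^2 + (20)*a^2*c^4 + (164)*a^2*b*c + (-64)*a^2*b*c^3 + (42)*a^2*b^2*c^2 + (82)*a^4 + (-32)*a^4*c^2 + (42)*a^4*b*c + (14)*a^6) * hφdet
end

section
/- For |μ| ≥ 4 the matrices [[1,1],[0,1]] and [[1,0],[μ,1]] in SL(2,ℂ) generate a free group of rank 2. -/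
open Matrix Pointwise

namespace Stmt14Aux

abbrev SL2 : Type := Matrix.SpecialLinearGroup (Fin 2) ℂ

noncomputable instance : SMul SL2 (Fin 2 → ℂ) :=
  ⟨fun g v => (g : Matrix (Fin 2) (Fin 2) ℂ).mulVec v⟩

lemma smul_def (g : SL2) (v : Fin 2 → ℂ) :
    g • v = (g : Matrix (Fin 2) (Fin 2) ℂ).mulVec v := rfl

noncomputable instance : MulAction SL2 (Fin 2 → ℂ) where
  one_smul v := by
    simp [smul_def]
  mul_smul g h v := by
    simp only [smul_def, Matrix.SpecialLinearGroup.coe_mul, Matrix.mulVec_mulVec]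

theorem freegroup_pingpong_bool {G : Type*} [Group G] {α : Type*} [MulAction G α]
    (a : Bool → G) (X : Bool → Set α)
    (hnon : ∀ i, (X i).Nonempty)
    (hdisj : Disjoint (X true) (X false))
    (hpow : ∀ i j, i ≠ j → ∀ n : ℤ, n ≠ 0 → a i ^ n • X j ⊆ X i) :
    Function.Injective (FreeGroup.lift a) := by
  have key : (FreeGroup.lift a : FreeGroup Bool →* G) =
      (Monoid.CoprodI.lift fun i : Bool => FreeGroup.lift fun _ : Unit => a i).comp
        (@freeGroupEquivCoprodI Bool).toMonoidHom := by
    ext i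
    simp
  rw [key, MonoidHom.coe_comp]
  refine Function.Injective.comp ?_ (MulEquiv.injective freeGroupEquivCoprodI)
  refine Monoid.CoprodI.lift_injective_of_ping_pong _ ?_ X hnon ?_ ?_
  · right
    refine ⟨true, ?_⟩
    rw [Cardinal.mk_congr FreeGroup.freeGroupUnitEquivInt, Cardinal.mk_int]
    exact (Cardinal.nat_lt_aleph0 3).le
  · intro i j hij
    cases i <;> cases j <;> first | exact absurd rfl hij | exact hdisj | exact hdisj.symm
  · intro i j hij
    refine FreeGroup.freeGroupUnitEquivInt.forall_congr_left.mpr ?_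
    intro n hne1
    change FreeGroup.lift (fun _ => a i) (FreeGroup.of () ^ n) • X j ⊆ X i
    simp only [map_zpow, FreeGroup.lift_apply_of]
    have hn : n ≠ 0 := by
      rintro rfl
      apply hne1
      simp [FreeGroup.freeGroupUnitEquivInt]
    exact hpow i j hij n hn

end Stmt14Aux

open Stmt14Aux
theorem stmt14 (μ : ℂ) (hμ : 4 ≤ ‖μ‖)
    (A B : Matrix.SpecialLinearGroup (Fin 2) ℂ)
    (hA : (A : Matrix (Fin 2) (Fin 2) ℂ) = !![1, 1; 0, 1])
    (hB : (B : Matrix (Fin 2) (Fin 2) ℂ) = !![1, 0; μ, 1]) :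
    Function.Injective
      (FreeGroup.lift (fun b : Bool => if b then A else B) : FreeGroup Bool →* _) := by
  -- powers of A
  have hAinv : ((A⁻¹ : SL2) : Matrix (Fin 2) (Fin 2) ℂ) = !![1, -1; 0, 1] := by
    have hd : Matrix.det !![(1:ℂ), -1; 0, 1] = 1 := by simp [Matrix.det_fin_two_of]
    have : A⁻¹ = (⟨!![1, -1; 0, 1], hd⟩ : SL2) := by
      apply inv_eq_of_mul_eq_one_right
      ext i j
      change ((A : Matrix (Fin 2) (Fin 2) ℂ) * !![1, -1; 0, 1] : Matrix (Fin 2) (Fin 2) ℂ) i j = (1 : Matrix (Fin 2) (Fin 2) ℂ) i j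
      rw [hA]
      fin_cases i <;> fin_cases j <;>
        simp [Matrix.mul_apply, Fin.sum_univ_two]
    rw [this]
  have hBinv : ((B⁻¹ : SL2) : Matrix (Fin 2) (Fin 2) ℂ) = !![1, 0; -μ, 1] := by
    have hd : Matrix.det !![(1:ℂ), 0; -μ, 1] = 1 := by simp [Matrix.det_fin_two_of]
    have : B⁻¹ = (⟨!![1, 0; -μ, 1], hd⟩ : SL2) := by
      apply inv_eq_of_mul_eq_one_right
      ext i j
      change ((B : Matrix (Fin 2) (Fin 2) ℂ) * !![1, 0; -μ, 1] : Matrix (Fin 2) (Fin 2) ℂ) i j = (1 : Matrix (Fin 2) (Fin 2) ℂ) i j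
      rw [hB]
      fin_cases i <;> fin_cases j <;>
        simp [Matrix.mul_apply, Fin.sum_univ_two]
    rw [this]
  have hApow : ∀ n : ℤ, ((A ^ n : SL2) : Matrix (Fin 2) (Fin 2) ℂ) = !![1, (n : ℂ); 0, 1] := by
    intro n
    induction n using Int.induction_on with
    | zero => ext i j; fin_cases i <;> fin_cases j <;> simp [zpow_zero]
    | succ k ih =>
      rw [_root_.zpow_add_one, Matrix.SpecialLinearGroup.coe_mul, ih, hA]
      ext i j
      fin_cases i <;> fin_cases j <;>
        simp [Matrix.mul_apply, Fin.sum_univ_two] <;> push_cast <;> ring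
    | pred k ih =>
      rw [_root_.zpow_sub_one, Matrix.SpecialLinearGroup.coe_mul, ih, hAinv]
      ext i j
      fin_cases i <;> fin_cases j <;>
        simp [Matrix.mul_apply, Fin.sum_univ_two] <;> push_cast <;> ring
  have hBpow : ∀ n : ℤ, ((B ^ n : SL2) : Matrix (Fin 2) (Fin 2) ℂ) = !![1, 0; (n : ℂ) * μ, 1] := by
    intro n
    induction n using Int.induction_on with
    | zero => ext i j; fin_cases i <;> fin_cases j <;> simp [zpow_zero]
    | succ k ih =>
      rw [_root_.zpow_add_one, Matrix.SpecialLinearGroup.coe_mul, ih, hB]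
      ext i j
      fin_cases i <;> fin_cases j <;>
        simp [Matrix.mul_apply, Fin.sum_univ_two] <;> push_cast <;> ring
    | pred k ih =>
      rw [_root_.zpow_sub_one, Matrix.SpecialLinearGroup.coe_mul, ih, hBinv]
      ext i j
      fin_cases i <;> fin_cases j <;>
        simp [Matrix.mul_apply, Fin.sum_univ_two] <;> push_cast <;> ring
  -- the ping-pong sets
  set X : Bool → Set (Fin 2 → ℂ) := fun b =>
    if b then {v | ‖v 1‖ < 2 * ‖v 0‖}
    else {v | 2 * ‖v 0‖ < ‖v 1‖} with hX
  apply freegroup_pingpong_bool _ X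
  · intro i
    cases i
    · exact ⟨![0, 1], by simp [hX]⟩
    · exact ⟨![1, 0], by simp [hX]⟩
  · rw [Set.disjoint_left]
    intro v hv hv'
    replace hv : ‖v 1‖ < 2 * ‖v 0‖ := hv
    replace hv' : 2 * ‖v 0‖ < ‖v 1‖ := hv'
    linarith
  · intro i j hij n hn
    have habsn : (1 : ℝ) ≤ ‖(n : ℂ)‖ := by
      rw [Complex.norm_intCast]
      exact_mod_cast Int.one_le_abs hn
    cases i
    · -- i = false, j = true : B ^ n • X true ⊆ X false
      have hj : j = true := by cases j <;> simp_all
      subst hj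
      rintro x ⟨v, hv, rfl⟩
      replace hv : ‖v 1‖ < 2 * ‖v 0‖ := hv
      have hsm : ((if false then A else B) ^ n : SL2) • v =
          ![v 0, (n : ℂ) * μ * v 0 + v 1] := by
        rw [smul_def]
        rw [show (if false then A else B) = B from rfl, hBpow n]
        funext i
        fin_cases i <;> simp [Matrix.mulVec, dotProduct, Fin.sum_univ_two]
      dsimp only
      rw [hsm]
      have h1 : ‖(n : ℂ) * μ * v 0‖ =
          ‖(n : ℂ)‖ * ‖μ‖ * ‖v 0‖ := by
        simp [_root_.map_mul]
      have h2 : ‖(n : ℂ) * μ * v 0‖ ≤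
          ‖(n : ℂ) * μ * v 0 + v 1‖ + ‖v 1‖ := by
        calc ‖(n : ℂ) * μ * v 0‖
            = ‖((n : ℂ) * μ * v 0 + v 1) + (-(v 1))‖ := by ring_nf
          _ ≤ _ := by simpa using norm_add_le ((n : ℂ) * μ * v 0 + v 1) (-(v 1))
      have h0 : (0 : ℝ) ≤ ‖v 0‖ := norm_nonneg _
      show 2 * ‖![v 0, (n : ℂ) * μ * v 0 + v 1] 0‖ <
        ‖![v 0, (n : ℂ) * μ * v 0 + v 1] 1‖
      simp only [Matrix.cons_val_zero, Matrix.cons_val_one, Matrix.head_cons]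
      have h3 : 4 * ‖v 0‖ ≤
          ‖(n : ℂ)‖ * ‖μ‖ * ‖v 0‖ := by
        have t1 : ‖μ‖ * ‖v 0‖ ≤
            ‖(n : ℂ)‖ * (‖μ‖ * ‖v 0‖) :=
          le_mul_of_one_le_left (by positivity) habsn
        have t2 : 4 * ‖v 0‖ ≤ ‖μ‖ * ‖v 0‖ :=
          mul_le_mul_of_nonneg_right hμ h0
        nlinarith
      linarith
    · -- i = true, j = false : A ^ n • X false ⊆ X true
      have hj : j = false := by cases j <;> simp_all
      subst hj
      rintro x ⟨v, hv, rfl⟩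
      replace hv : 2 * ‖v 0‖ < ‖v 1‖ := hv
      have hsm : ((if true then A else B) ^ n : SL2) • v =
          ![v 0 + (n : ℂ) * v 1, v 1] := by
        rw [smul_def]
        rw [show (if true then A else B) = A from rfl, hApow n]
        funext i
        fin_cases i <;> simp [Matrix.mulVec, dotProduct, Fin.sum_univ_two]
      dsimp only
      rw [hsm]
      have h1 : ‖(n : ℂ) * v 1‖ =
          ‖(n : ℂ)‖ * ‖v 1‖ := by simp [_root_.map_mul]
      have h2 : ‖(n : ℂ) * v 1‖ ≤
          ‖v 0 + (n : ℂ) * v 1‖ + ‖v 0‖ := by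
        calc ‖(n : ℂ) * v 1‖
            = ‖(v 0 + (n : ℂ) * v 1) + (-(v 0))‖ := by ring_nf
          _ ≤ _ := by simpa using norm_add_le (v 0 + (n : ℂ) * v 1) (-(v 0))
      show ‖![v 0 + (n : ℂ) * v 1, v 1] 1‖ <
        2 * ‖![v 0 + (n : ℂ) * v 1, v 1] 0‖
      simp only [Matrix.cons_val_zero, Matrix.cons_val_one, Matrix.head_cons]
      have h3 : ‖v 1‖ ≤ ‖(n : ℂ)‖ * ‖v 1‖ :=
        le_mul_of_one_le_left (norm_nonneg _) habsn
      linarith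
end
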